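/- arXiv:2001.10476 — 2 statements merged into one kernel-verified Lean document; each statement's English description precedes it below -/
import Mathlib

section
/- If 0 < α ≤ 1/15000 and 5/2 + 2α ≤ p ≤ 3 + 2α, then condition (C) holds: ∫₀¹ I_t((2+α)/p, 1−(2+α)/p) t^{2p−4α−5}(1−t⁴)^α dt − 1/(4(α+1)) ≤ 0. -/
open MeasureTheory intervalIntegral

/-- The Beta function `B(x,y) = ∫₀¹ t^(x-1) (1-t)^(y-1) dt`. -/
noncomputable def betaFn (x y : ℝ) : ℝ :=
  ∫ t in (0:ℝ)..1, t ^ (x - 1) * (1 - t) ^ (y - 1)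

/-- The incomplete Beta function `B_T(x,y) = ∫₀^T s^(x-1) (1-s)^(y-1) ds`. -/
noncomputable def betaInc (T x y : ℝ) : ℝ :=
  ∫ s in (0:ℝ)..T, s ^ (x - 1) * (1 - s) ^ (y - 1)

/-- The regularized incomplete Beta function `I_T(x,y) = B_T(x,y)/B(x,y)`. -/
noncomputable def betaReg (T x y : ℝ) : ℝ := betaInc T x y / betaFn x y

/-- Generalized binomial coefficient `binom(α,k) = α(α-1)⋯(α-k+1)/k!`. -/
noncomputable def gBinom (α : ℝ) (k : ℕ) : ℝ :=
  (∏ i ∈ Finset.range k, (α - i)) / (Nat.factorial k)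

/-- `ψ_{α,p}(t) = t^((2+α)/p - 1) (1-t)^(-(2+α)/p)`. -/
noncomputable def psiFn (α p t : ℝ) : ℝ :=
  t ^ ((2 + α) / p - 1) * (1 - t) ^ (-((2 + α) / p))

/-- `H_{α,p}(s) = Σ_k binom(α,k)(-1)^k/(p-2α-2+2k) - (1/(2(α+1)))(1-s⁴)^(α+1)`. -/
noncomputable def Hfun (α p s : ℝ) : ℝ :=
  (∑' k : ℕ, gBinom α k * (-1) ^ k / (p - 2 * α - 2 + 2 * k)) -
    1 / (2 * (α + 1)) * (1 - s ^ 4) ^ (α + 1)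

/-- `K_{α,p}(s,t) = Σ_k binom(α,k)(-1)^k max{s²,t²}^(p-2α-2+2k)/(p-2α-2+2k)`. -/
noncomputable def Kfun (α p s t : ℝ) : ℝ :=
  ∑' k : ℕ, gBinom α k * (-1) ^ k * (max (s ^ 2) (t ^ 2)) ^ (p - 2 * α - 2 + 2 * (k : ℝ)) /
    (p - 2 * α - 2 + 2 * k)

/-- Condition (C): `∫₀¹ I_t((2+α)/p, 1-(2+α)/p) t^(2p-4α-5)(1-t⁴)^α dt - 1/(4(α+1)) ≤ 0`. -/
noncomputable def condC (α p : ℝ) : Prop :=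
  (∫ t in (0:ℝ)..1,
      betaReg t ((2 + α) / p) (1 - (2 + α) / p) * t ^ (2 * p - 4 * α - 5) * (1 - t ^ 4) ^ α)
    - 1 / (4 * (α + 1)) ≤ 0

/-- Lebesgue area measure on `ℂ` normalized so that the unit disk has measure 1. -/
noncomputable def normalizedArea : Measure ℂ := (ENNReal.ofReal Real.pi)⁻¹ • volume

/-- The (p-th power of the) weighted Bergman norm:
`‖f‖_{A^p_α} = ((α+1) ∫_𝔻 |f(w)|^p (1-|w|²)^α dA(w))^(1/p)`. -/
noncomputable def bergmanNorm (α p : ℝ) (f : ℂ → ℂ) : ℝ :=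
  ((α + 1) * ∫ w in Metric.ball (0 : ℂ) 1,
      ‖f w‖ ^ p * (1 - ‖w‖ ^ 2) ^ α ∂normalizedArea) ^ (1 / p)

/-- Membership in the weighted Bergman space `A^p_α`: `f` is analytic on the unit disk and has
finite Bergman norm (the defining integrand is integrable). -/
def MemBergman (α p : ℝ) (f : ℂ → ℂ) : Prop :=
  DifferentiableOn ℂ f (Metric.ball (0 : ℂ) 1) ∧
  IntegrableOn (fun w => ‖f w‖ ^ p * (1 - ‖w‖ ^ 2) ^ α)
    (Metric.ball (0 : ℂ) 1) normalizedArea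

/-- The Hilbert matrix operator `ℋ(f)(z) = ∫₀¹ f(t/((t-1)z+1)) / ((t-1)z+1) dt`. -/
noncomputable def hilbertOp (f : ℂ → ℂ) (z : ℂ) : ℂ :=
  ∫ t in (0:ℝ)..1, f ((t : ℂ) / (((t : ℂ) - 1) * z + 1)) / (((t : ℂ) - 1) * z + 1)

/-- The operator norm of the Hilbert matrix operator on `A^p_α`:
`sup { ‖ℋ f‖_{A^p_α} : f ∈ A^p_α, ‖f‖_{A^p_α} ≤ 1 }`. -/
noncomputable def hilbertOpNorm (α p : ℝ) : ℝ :=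
  sSup {c : ℝ | ∃ f : ℂ → ℂ, MemBergman α p f ∧ bergmanNorm α p f ≤ 1 ∧
    c = bergmanNorm α p (hilbertOp f)}

/-!
With `x = (2 + α) / p` and `s = 2p - 4α - 4 ∈ [1, 2]` the integrand of condition (C) is
`I_t(x, 1 - x) t^(s-1) (1 - t⁴)^α`. Dropping the weight `(1 - t⁴)^α ≤ 1` and integrating by parts
bounds the integral by `(1 - B(x + s, 1 - x) / B(x, 1 - x)) / s`. Since `t^(s-2) ≥ 1 + (2 - s)(1 - t)`
(convexity of `exp`), `t^s ≥ (3 - s) t² - (2 - s) t³`; integrating this against the Beta density and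
using `B(x + n, 1 - x) = x(x + 1)⋯(x + n - 1) / n! · B(x, 1 - x)` bounds the Beta ratio from below
by a polynomial in `x` and `s`. What remains is a polynomial inequality in `x` and `α`, which holds
for small `α`.
-/

open Set Real

lemma intervalIntegrable_rpow_mul_one_sub_rpow {A B : ℝ} (hA : -1 < A) (hB : -1 < B) :
    IntervalIntegrable (fun t : ℝ => t ^ A * (1 - t) ^ B) volume 0 1 := by
  have hleft : IntervalIntegrable (fun t : ℝ => t ^ A * (1 - t) ^ B) volume 0 (1 / 2) := by
    refine (intervalIntegral.intervalIntegrable_rpow' hA).mul_continuousOn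
      (ContinuousOn.rpow_const (by fun_prop) fun t ht => Or.inl ?_)
    rw [uIcc_of_le (by norm_num)] at ht
    linarith [ht.2]
  have hright : IntervalIntegrable (fun t : ℝ => t ^ A * (1 - t) ^ B) volume (1 / 2) 1 := by
    have h := (intervalIntegral.intervalIntegrable_rpow' (a := 1 / 2) (b := 0) hB).comp_sub_left 1
    norm_num at h
    refine h.continuousOn_mul (ContinuousOn.rpow_const (by fun_prop) fun t ht => Or.inl ?_)
    rw [uIcc_of_le (by norm_num)] at ht
    linarith [ht.1]
  exact hleft.trans hright

lemma ofReal_betaFn (a b : ℝ) : (betaFn a b : ℂ) = Complex.betaIntegral a b := by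
  rw [betaFn, ← intervalIntegral.integral_ofReal, Complex.betaIntegral]
  refine intervalIntegral.integral_congr fun t ht => ?_
  rw [uIcc_of_le zero_le_one] at ht
  push_cast [Complex.ofReal_cpow ht.1, Complex.ofReal_cpow (sub_nonneg.2 ht.2)]
  rfl

lemma betaFn_eq_Gamma {a b : ℝ} (ha : 0 < a) (hb : 0 < b) :
    betaFn a b = Gamma a * Gamma b / Gamma (a + b) := by
  have h := Complex.Gamma_mul_Gamma_eq_betaIntegral (s := a) (t := b) (by simpa) (by simpa)
  rw [← ofReal_betaFn, ← Complex.ofReal_add] at h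
  simp only [Complex.Gamma_ofReal] at h
  norm_cast at h
  rw [h, mul_div_cancel_left₀ _ (Gamma_pos_of_pos (add_pos ha hb)).ne']

lemma betaFn_pos {a b : ℝ} (ha : 0 < a) (hb : 0 < b) : 0 < betaFn a b := by
  rw [betaFn_eq_Gamma ha hb]
  exact div_pos (mul_pos (Gamma_pos_of_pos ha) (Gamma_pos_of_pos hb))
    (Gamma_pos_of_pos (add_pos ha hb))

lemma betaFn_add_one {a b : ℝ} (ha : 0 < a) (hb : 0 < b) :
    betaFn (a + 1) b = a / (a + b) * betaFn a b := by
  rw [betaFn_eq_Gamma (by linarith) hb, betaFn_eq_Gamma ha hb, add_right_comm,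
    Gamma_add_one ha.ne', Gamma_add_one (by positivity)]
  have := (Gamma_pos_of_pos (add_pos ha hb)).ne'
  field_simp

lemma continuousOn_betaInc {a b : ℝ} (ha : 0 < a) (hb : 0 < b) :
    ContinuousOn (fun T => betaInc T a b) (Icc 0 1) := by
  have h := intervalIntegral.continuousOn_primitive_interval'
    (intervalIntegrable_rpow_mul_one_sub_rpow (A := a - 1) (B := b - 1) (by linarith)
      (by linarith)) left_mem_uIcc
  rwa [uIcc_of_le zero_le_one] at h

lemma betaInc_nonneg {T : ℝ} (a b : ℝ) (hT : T ∈ Icc (0 : ℝ) 1) : 0 ≤ betaInc T a b :=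
  intervalIntegral.integral_nonneg hT.1 fun u hu =>
    mul_nonneg (rpow_nonneg hu.1 _) (rpow_nonneg (by linarith [hu.2, hT.2]) _)

lemma hasDerivAt_betaInc {a b t : ℝ} (ha : 0 < a) (hb : 0 < b) (ht : t ∈ Ioo (0 : ℝ) 1) :
    HasDerivAt (fun T => betaInc T a b) (t ^ (a - 1) * (1 - t) ^ (b - 1)) t := by
  have hcont : ContinuousOn (fun u : ℝ => u ^ (a - 1) * (1 - u) ^ (b - 1)) (Ioo 0 1) := by
    refine ContinuousOn.mul (ContinuousOn.rpow_const (by fun_prop) fun u hu => Or.inl ?_)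
      (ContinuousOn.rpow_const (by fun_prop) fun u hu => Or.inl ?_)
    exacts [hu.1.ne', by linarith [hu.2]]
  exact intervalIntegral.integral_hasDerivAt_right
    ((intervalIntegrable_rpow_mul_one_sub_rpow (by linarith) (by linarith)).mono_set
      (uIcc_subset_uIcc left_mem_uIcc (by simp [ht.1.le, ht.2.le])))
    ⟨Ioo 0 1, Ioo_mem_nhds ht.1 ht.2, hcont.aestronglyMeasurable measurableSet_Ioo⟩
    (hcont.continuousAt (Ioo_mem_nhds ht.1 ht.2))

lemma mul_integral_betaInc_mul_rpow {a b s : ℝ} (ha : 0 < a) (hb : 0 < b) (hs : 0 < s) :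
    s * ∫ t in (0 : ℝ)..1, betaInc t a b * t ^ (s - 1) = betaFn a b - betaFn (a + s) b := by
  have hψs : IntervalIntegrable (fun t => t ^ (a + s - 1) * (1 - t) ^ (b - 1)) volume 0 1 :=
    intervalIntegrable_rpow_mul_one_sub_rpow (by linarith) (by linarith)
  have hΦs : IntervalIntegrable (fun t => betaInc t a b * t ^ (s - 1)) volume 0 1 :=
    (intervalIntegral.intervalIntegrable_rpow' (by linarith)).continuousOn_mul
      (by simpa [uIcc_of_le zero_le_one] using continuousOn_betaInc ha hb)
  have hderiv : ∀ t ∈ Ioo (0 : ℝ) 1, HasDerivAt (fun u => betaInc u a b * u ^ s)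
      (t ^ (a + s - 1) * (1 - t) ^ (b - 1) + s * (betaInc t a b * t ^ (s - 1))) t := by
    intro t ht
    refine ((hasDerivAt_betaInc ha hb ht).mul
      (hasDerivAt_rpow_const (p := s) (Or.inl ht.1.ne'))).congr_deriv ?_
    rw [show a + s - 1 = a - 1 + s by ring, rpow_add ht.1]
    ring
  have hftc := intervalIntegral.integral_eq_sub_of_hasDerivAt_of_le zero_le_one
    ((continuousOn_betaInc ha hb).mul (continuous_rpow_const hs.le).continuousOn) hderiv
    (hψs.add (hΦs.const_mul s))
  rw [intervalIntegral.integral_add hψs (hΦs.const_mul s),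
    intervalIntegral.integral_const_mul] at hftc
  simp only [Pi.mul_apply, one_rpow, zero_rpow hs.ne', mul_one, mul_zero, sub_zero] at hftc
  change _ = betaInc 1 a b - ∫ t in (0 : ℝ)..1, t ^ (a + s - 1) * (1 - t) ^ (b - 1)
  linarith

lemma sq_mul_one_add_mul_one_sub_le_rpow {s t : ℝ} (hs : s ≤ 2) (ht : 0 < t) :
    t ^ 2 * (1 + (2 - s) * (1 - t)) ≤ t ^ s := by
  have hlog : (2 - s) * (1 - t) ≤ (s - 2) * log t := by
    nlinarith [log_le_sub_one_of_pos ht]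
  have hexp : 1 + (2 - s) * (1 - t) ≤ t ^ (s - 2) := by
    rw [rpow_def_of_pos ht]
    linarith [add_one_le_exp (log t * (s - 2))]
  calc t ^ 2 * (1 + (2 - s) * (1 - t)) ≤ t ^ (2 : ℝ) * t ^ (s - 2) := by
        rw [rpow_two]; gcongr
    _ = t ^ s := by rw [← rpow_add ht]; ring_nf

lemma sub_mul_betaFn_le_betaFn_add {a b s : ℝ} (ha : 0 < a) (hb : 0 < b) (has : 0 < a + s)
    (hs : s ≤ 2) :
    (3 - s) * betaFn (a + 2) b - (2 - s) * betaFn (a + 3) b ≤ betaFn (a + s) b := by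
  have hint {c : ℝ} (hc : 0 < c) :
      IntervalIntegrable (fun t => t ^ (c - 1) * (1 - t) ^ (b - 1)) volume 0 1 :=
    intervalIntegrable_rpow_mul_one_sub_rpow (by linarith) (by linarith)
  unfold betaFn
  rw [← intervalIntegral.integral_const_mul, ← intervalIntegral.integral_const_mul,
    ← intervalIntegral.integral_sub ((hint (by linarith)).const_mul _)
      ((hint (by linarith)).const_mul _)]
  refine intervalIntegral.integral_mono_on_of_le_Ioo zero_le_one
    (((hint (by linarith)).const_mul _).sub ((hint (by linarith)).const_mul _)) (hint has)
    fun t ht => ?_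
  have hdens : 0 ≤ t ^ (a - 1) * (1 - t) ^ (b - 1) :=
    mul_nonneg (rpow_nonneg ht.1.le _) (rpow_nonneg (by linarith [ht.2]) _)
  have hpow (c : ℝ) : t ^ (a + c - 1) = t ^ (a - 1) * t ^ c := by
    rw [← rpow_add ht.1]; ring_nf
  rw [hpow, hpow, hpow, rpow_ofNat, rpow_ofNat]
  nlinarith [mul_le_mul_of_nonneg_left (sq_mul_one_add_mul_one_sub_le_rpow hs ht.1) hdens]

lemma betaFn_add_two_one_sub {x : ℝ} (hx0 : 0 < x) (hx1 : x < 1) :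
    betaFn (x + 2) (1 - x) = x * (x + 1) / 2 * betaFn x (1 - x) := by
  rw [show x + 2 = x + 1 + 1 by ring, betaFn_add_one (by linarith) (by linarith),
    betaFn_add_one hx0 (by linarith)]
  ring

lemma betaFn_add_three_one_sub {x : ℝ} (hx0 : 0 < x) (hx1 : x < 1) :
    betaFn (x + 3) (1 - x) = x * (x + 1) * (x + 2) / 6 * betaFn x (1 - x) := by
  rw [show x + 3 = x + 2 + 1 by ring, betaFn_add_one (by linarith) (by linarith),
    betaFn_add_two_one_sub hx0 hx1]
  ring

noncomputable def betaMomentBound (x s : ℝ) : ℝ :=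
  (3 - s) * (x * (x + 1) / 2) - (2 - s) * (x * (x + 1) * (x + 2) / 6)

lemma betaMomentBound_le_betaFn_add_div_betaFn {x s : ℝ} (hx0 : 0 < x) (hx1 : x < 1)
    (hs0 : 0 ≤ s) (hs : s ≤ 2) :
    betaMomentBound x s ≤ betaFn (x + s) (1 - x) / betaFn x (1 - x) := by
  have h := sub_mul_betaFn_le_betaFn_add hx0 (sub_pos.2 hx1) (by linarith) hs
  rw [betaFn_add_two_one_sub hx0 hx1, betaFn_add_three_one_sub hx0 hx1] at h
  rw [le_div_iff₀ (betaFn_pos hx0 (sub_pos.2 hx1)), betaMomentBound]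
  linarith

lemma intervalIntegrable_betaReg_mul_rpow {a b s : ℝ} (ha : 0 < a) (hb : 0 < b) (hs : 0 < s) :
    IntervalIntegrable (fun t => betaReg t a b * t ^ (s - 1)) volume 0 1 :=
  (intervalIntegral.intervalIntegrable_rpow' (by linarith)).continuousOn_mul
    (by rw [uIcc_of_le zero_le_one]; exact (continuousOn_betaInc ha hb).div_const _)

lemma integral_betaReg_mul_rpow {a b s : ℝ} (ha : 0 < a) (hb : 0 < b) (hs : 0 < s) :
    ∫ t in (0 : ℝ)..1, betaReg t a b * t ^ (s - 1)
      = (1 - betaFn (a + s) b / betaFn a b) / s := by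
  have hB := (betaFn_pos ha hb).ne'
  simp only [betaReg, div_mul_eq_mul_div, intervalIntegral.integral_div]
  field_simp
  linarith [mul_integral_betaInc_mul_rpow ha hb hs]

lemma integral_mul_rpow_one_sub_pow_le {f : ℝ → ℝ} {α : ℝ} (n : ℕ) (hα : 0 ≤ α)
    (hf : IntervalIntegrable f volume 0 1) (hf0 : ∀ t ∈ Icc (0 : ℝ) 1, 0 ≤ f t) :
    ∫ t in (0 : ℝ)..1, f t * (1 - t ^ n) ^ α ≤ ∫ t in (0 : ℝ)..1, f t := by
  refine intervalIntegral.integral_mono_on zero_le_one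
    (hf.mul_continuousOn (ContinuousOn.rpow_const (by fun_prop) fun _ _ => Or.inr hα)) hf
    fun t ht => mul_le_of_le_one_right (hf0 t ht) (rpow_le_one ?_ ?_ hα)
  · linarith [pow_le_one₀ ht.1 ht.2 (n := n)]
  · linarith [pow_nonneg ht.1 n]

lemma four_mul_one_sub_betaMomentBound_le {α p x s : ℝ} (hα0 : 0 ≤ α) (hα1 : α ≤ 1 / 15000)
    (hp1 : 5 / 2 + 2 * α ≤ p) (hx : x * p = 2 + α) (hs : s = 2 * p - 4 * α - 4) :
    4 * (1 + α) * (1 - betaMomentBound x s) ≤ s := by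
  have hx0 : 0 < x := by nlinarith
  have hxu : x ≤ 4 / 5 := by nlinarith
  have h0 : x * s = (4 + 2 * α) - (4 + 4 * α) * x := by linear_combination 2 * hx + x * hs
  have h1 : x ^ 2 * s = (4 + 2 * α) * x - (4 + 4 * α) * x ^ 2 := by linear_combination x * h0
  have h2 : x ^ 3 * s = (4 + 2 * α) * x ^ 2 - (4 + 4 * α) * x ^ 3 := by
    linear_combination x ^ 2 * h0
  have h3 : x ^ 4 * s = (4 + 2 * α) * x ^ 3 - (4 + 4 * α) * x ^ 4 := by
    linear_combination x ^ 3 * h0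
  have hu : (0 : ℝ) ≤ 4 / 5 - x := by linarith
  -- `hq` is `6 x (s - 4 (1 + α) (1 - betaMomentBound x s))` with `s` eliminated via `h0`–`h3`
  have hq : 0 ≤ 6 * (4 + 2 * α) - (4 + 4 * α) * (12 + (4 + 2 * α)) * x
      + (4 + 4 * α) * (5 + (4 + 4 * α)) * x ^ 2 + (4 + 4 * α) * (3 + (4 + 2 * α)) * x ^ 3
      - (4 + 4 * α) * (2 + (4 + 4 * α)) * x ^ 4 := by
    nlinarith [mul_nonneg (mul_nonneg (mul_nonneg hu hu) hu) hx0.le,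
      mul_nonneg (mul_nonneg hu hu) hu, mul_nonneg hu hu, hu, hx0.le,
      mul_nonneg hα0 hx0.le, mul_nonneg (mul_nonneg hα0 hx0.le) hx0.le,
      mul_nonneg hα0 (mul_nonneg (mul_nonneg hx0.le hx0.le) hx0.le),
      mul_nonneg hα0 (mul_nonneg (mul_nonneg hx0.le hx0.le) (mul_nonneg hx0.le hx0.le)),
      mul_nonneg (mul_nonneg hα0 hα0) hx0.le, hα1, hα0]
  rw [betaMomentBound]
  nlinarith [hq, h0, h1, h2, h3, hx0]

theorem condC_small_alpha_b (α p : ℝ) (hα0 : 0 < α) (hα1 : α ≤ 1 / 15000)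
    (hp1 : 5 / 2 + 2 * α ≤ p) (hp2 : p ≤ 3 + 2 * α) :
    condC α p := by
  have hp0 : 0 < p := by linarith
  set x := (2 + α) / p
  set s := 2 * p - 4 * α - 4 with hs
  have hx0 : 0 < x := by positivity
  have hx1 : x < 1 := (div_lt_one hp0).2 (by linarith)
  have hs0 : 0 < s := by linarith
  rw [condC, sub_nonpos, show 2 * p - 4 * α - 5 = s - 1 by ring]
  calc _ ≤ ∫ t in (0 : ℝ)..1, betaReg t x (1 - x) * t ^ (s - 1) :=
        integral_mul_rpow_one_sub_pow_le 4 hα0.le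
          (intervalIntegrable_betaReg_mul_rpow hx0 (by linarith) hs0) fun t ht =>
            mul_nonneg (div_nonneg (betaInc_nonneg _ _ ht) (betaFn_pos hx0 (by linarith)).le)
              (rpow_nonneg ht.1 _)
    _ = (1 - betaFn (x + s) (1 - x) / betaFn x (1 - x)) / s :=
        integral_betaReg_mul_rpow hx0 (by linarith) hs0
    _ ≤ (1 - betaMomentBound x s) / s := by
        gcongr
        exact betaMomentBound_le_betaFn_add_div_betaFn hx0 hx1 hs0.le (by linarith)
    _ ≤ 1 / (4 * (α + 1)) := by
        rw [div_le_div_iff₀ hs0 (by positivity)]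
        linarith [four_mul_one_sub_betaMomentBound_le hα0.le hα1 hp1
          (div_mul_cancel₀ _ hp0.ne') hs]
end

section
/- Let 4 < p < 6. Then condition (C) with α = 1 (that is, ∫₀¹ I_t(3/p, 1−3/p) t^{2p−9}(1−t⁴) dt − 1/8 ≤ 0) holds if and only if ½(6p − p²) B(3/p, 2p−8) − (p−2)/(p−4) + (2p−5+3/p)(2p−6+3/p)(2p−7+3/p)(2p−8+3/p) / (2(p−2)(2p−5)(2p−6)(2p−7)) ≤ 0. -/
open MeasureTheory intervalIntegral

/-!
Integrating by parts against `d(t^c / c)` gives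
`∫₀¹ B_t(x,y) t^(c-1) dt = (B(x,y) - B(x+c,y)) / c`. For `y = 1 - x` the Gamma-function
expression of `B` turns `B(x+c, 1-x) / B(x, 1-x)` into `1 / (c B(x,c))`. With `x = 3/p` and
`c = 2p-8, 2p-4`, and `B(x, y+1) = y/(x+y) B(x,y)` applied four times, the left-hand side of (C)
becomes a rational function of `p` and `B(3/p, 2p-8)`; multiplied by the positive number
`4(p-4)(p-2) B(3/p, 2p-8)` it is the stated expression.
-/

lemma ofReal_betaIntegrand {x y t : ℝ} (ht : t ∈ Set.Icc (0:ℝ) 1) :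
    (t : ℂ) ^ ((x : ℂ) - 1) * (1 - (t : ℂ)) ^ ((y : ℂ) - 1)
      = ((t ^ (x - 1) * (1 - t) ^ (y - 1) : ℝ) : ℂ) := by
  rw [Complex.ofReal_mul, Complex.ofReal_cpow ht.1, Complex.ofReal_cpow (sub_nonneg.2 ht.2)]
  push_cast
  ring

lemma betaIntegrand_intervalIntegrable {x y : ℝ} (hx : 0 < x) (hy : 0 < y) :
    IntervalIntegrable (fun t : ℝ => t ^ (x - 1) * (1 - t) ^ (y - 1)) volume 0 1 := by
  have h := Complex.betaIntegral_convergent (u := x) (v := y) (by simpa) (by simpa)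
  rw [intervalIntegrable_iff_integrableOn_Ioc_of_le zero_le_one] at h ⊢
  refine IntegrableOn.congr_fun h.re (fun t ht => ?_) measurableSet_Ioc
  rw [ofReal_betaIntegrand (Set.Ioc_subset_Icc_self ht)]
  exact Complex.ofReal_re _

lemma betaFn_eq_Gamma_s18 {x y : ℝ} (hx : 0 < x) (hy : 0 < y) :
    betaFn x y = Real.Gamma x * Real.Gamma y / Real.Gamma (x + y) := by
  have h := Complex.betaIntegral_eq_Gamma_mul_div (u := x) (v := y) (by simpa) (by simpa)
  rw [Complex.betaIntegral, ← Complex.ofReal_add] at h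
  simp only [Complex.Gamma_ofReal] at h
  rw [intervalIntegral.integral_congr (fun t ht => ofReal_betaIntegrand
      (by rwa [Set.uIcc_of_le zero_le_one] at ht)), intervalIntegral.integral_ofReal] at h
  exact_mod_cast h

lemma betaFn_pos_s18 {x y : ℝ} (hx : 0 < x) (hy : 0 < y) : 0 < betaFn x y := by
  rw [betaFn_eq_Gamma_s18 hx hy]
  have := Real.Gamma_pos_of_pos hx
  have := Real.Gamma_pos_of_pos hy
  have := Real.Gamma_pos_of_pos (add_pos hx hy)
  positivity

lemma betaFn_add_one_right {x y : ℝ} (hx : 0 < x) (hy : 0 < y) :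
    betaFn x (y + 1) = y / (x + y) * betaFn x y := by
  have hxy : x + y ≠ 0 := (add_pos hx hy).ne'
  rw [betaFn_eq_Gamma_s18 hx (by linarith), betaFn_eq_Gamma_s18 hx hy, ← add_assoc,
    Real.Gamma_add_one hy.ne', Real.Gamma_add_one hxy]
  have := (Real.Gamma_pos_of_pos (add_pos hx hy)).ne'
  field_simp

lemma betaFn_add_nat_right {x y : ℝ} (hx : 0 < x) (hy : 0 < y) (n : ℕ) :
    betaFn x (y + n) = (∏ i ∈ Finset.range n, (y + i) / (x + y + i)) * betaFn x y := by
  induction n with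
  | zero => simp
  | succ n ih =>
    rw [Nat.cast_succ, ← add_assoc, betaFn_add_one_right hx (by positivity), ih,
      Finset.prod_range_succ]
    ring

lemma betaFn_add_left_one_sub {x c : ℝ} (hx0 : 0 < x) (hx1 : x < 1) (hc : 0 < c) :
    betaFn (x + c) (1 - x) = betaFn x (1 - x) / (c * betaFn x c) := by
  have hy : 0 < 1 - x := sub_pos.2 hx1
  rw [betaFn_eq_Gamma_s18 (add_pos hx0 hc) hy, betaFn_eq_Gamma_s18 hx0 hy, betaFn_eq_Gamma_s18 hx0 hc,
    show x + c + (1 - x) = c + 1 by ring, add_sub_cancel, Real.Gamma_one, Real.Gamma_add_one hc.ne']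
  have := (Real.Gamma_pos_of_pos hx0).ne'
  have := (Real.Gamma_pos_of_pos hc).ne'
  have := (Real.Gamma_pos_of_pos (add_pos hx0 hc)).ne'
  field_simp

lemma betaIntegrand_continuousOn {x y : ℝ} :
    ContinuousOn (fun t : ℝ => t ^ (x - 1) * (1 - t) ^ (y - 1)) (Set.Ioo 0 1) := by
  intro t ht
  have ht0 : t ≠ 0 := ht.1.ne'
  have ht1 : 1 - t ≠ 0 := (sub_pos.2 ht.2).ne'
  apply ContinuousAt.continuousWithinAt
  fun_prop (disch := exact Or.inl ‹_›)

lemma betaInc_continuousOn {x y : ℝ} (hx : 0 < x) (hy : 0 < y) :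
    ContinuousOn (fun T => betaInc T x y) (Set.Icc 0 1) := by
  have h := (intervalIntegrable_iff_integrableOn_Icc_of_le zero_le_one).1
    (betaIntegrand_intervalIntegrable hx hy)
  rw [← Set.uIcc_of_le (zero_le_one' ℝ)] at h ⊢
  exact continuousOn_primitive_interval h

lemma betaInc_hasDerivAt {x y t : ℝ} (hx : 0 < x) (hy : 0 < y) (ht : t ∈ Set.Ioo (0:ℝ) 1) :
    HasDerivAt (fun T => betaInc T x y) (t ^ (x - 1) * (1 - t) ^ (y - 1)) t := by
  have hint := (betaIntegrand_intervalIntegrable hx hy).mono_set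
    (Set.uIcc_subset_uIcc_left (Set.uIcc_of_le (zero_le_one' ℝ) ▸ Set.Ioo_subset_Icc_self ht))
  exact integral_hasDerivAt_right hint
    (betaIntegrand_continuousOn.stronglyMeasurableAtFilter isOpen_Ioo t ht)
    (betaIntegrand_continuousOn.continuousAt (isOpen_Ioo.mem_nhds ht))

lemma integral_betaInc_mul_rpow {x y c : ℝ} (hx : 0 < x) (hy : 0 < y) (hc : 0 < c) :
    ∫ t in (0:ℝ)..1, betaInc t x y * t ^ (c - 1) = (betaFn x y - betaFn (x + c) y) / c := by
  have hparts := integral_mul_deriv_eq_deriv_mul_of_hasDerivAt (a := 0) (b := 1)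
    (u := fun T => betaInc T x y) (v := fun t => t ^ c / c)
    (u' := fun t => t ^ (x - 1) * (1 - t) ^ (y - 1)) (v' := fun t => t ^ (c - 1))
    (by rw [Set.uIcc_of_le zero_le_one]; exact betaInc_continuousOn hx hy)
    ((continuous_id.rpow_const fun _ => Or.inr hc.le).div_const c).continuousOn
    (fun t ht => betaInc_hasDerivAt hx hy (by simpa using ht))
    (fun t ht => by
      simp only [zero_le_one, min_eq_left, max_eq_right] at ht
      simpa [hc.ne'] using (Real.hasDerivAt_rpow_const (p := c) (Or.inl ht.1.ne')).div_const c)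
    (betaIntegrand_intervalIntegrable hx hy) (intervalIntegrable_rpow' (by linarith))
  have hshift : ∫ t in (0:ℝ)..1, t ^ (x - 1) * (1 - t) ^ (y - 1) * (t ^ c / c)
      = betaFn (x + c) y / c := by
    rw [betaFn, ← intervalIntegral.integral_div]
    refine integral_congr_ae (ae_of_all _ fun t ht => ?_)
    rw [Set.uIoc_of_le zero_le_one] at ht
    rw [show x + c - 1 = x - 1 + c by ring, Real.rpow_add ht.1]
    ring
  have h1 : betaInc 1 x y = betaFn x y := rfl
  have h0 : betaInc 0 x y = 0 := integral_same
  rw [hparts, hshift, h1, h0, Real.one_rpow]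
  ring

lemma integral_betaReg_mul_rpow_mul_one_sub_pow_four {a b : ℝ} (ha0 : 0 < a) (ha1 : a < 1)
    (hb : 0 < b) :
    ∫ t in (0:ℝ)..1, betaReg t a (1 - a) * t ^ (b - 1) * (1 - t ^ 4)
      = (1 - 1 / (b * betaFn a b)) / b - (1 - 1 / ((b + 4) * betaFn a (b + 4))) / (b + 4) := by
  have hy : 0 < 1 - a := sub_pos.2 ha1
  have hb4 : 0 < b + 4 := by linarith
  have hint : ∀ c : ℝ, 0 < c →
      IntervalIntegrable (fun t => betaInc t a (1 - a) * t ^ (c - 1)) volume 0 1 := fun c hc =>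
    (intervalIntegrable_rpow' (r := c - 1) (by linarith)).continuousOn_mul
      (Set.uIcc_of_le (zero_le_one' ℝ) ▸ betaInc_continuousOn ha0 hy)
  have hsplit : ∀ t ∈ Set.uIcc (0:ℝ) 1, betaReg t a (1 - a) * t ^ (b - 1) * (1 - t ^ 4)
      = (betaInc t a (1 - a) * t ^ (b - 1) - betaInc t a (1 - a) * t ^ (b + 4 - 1))
        / betaFn a (1 - a) := by
    intro t ht
    rw [Set.uIcc_of_le zero_le_one] at ht
    rw [show b + 4 - 1 = b - 1 + (4 : ℕ) by push_cast; ring,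
      Real.rpow_add' ht.1 (by push_cast; linarith), Real.rpow_natCast, betaReg]
    ring
  have hB0 := (betaFn_pos_s18 ha0 hy).ne'
  have hB := (betaFn_pos_s18 ha0 hb).ne'
  have hB4 := (betaFn_pos_s18 ha0 hb4).ne'
  rw [integral_congr hsplit, intervalIntegral.integral_div,
    intervalIntegral.integral_sub (hint b hb) (hint _ hb4),
    integral_betaInc_mul_rpow ha0 hy hb, integral_betaInc_mul_rpow ha0 hy hb4,
    betaFn_add_left_one_sub ha0 ha1 hb, betaFn_add_left_one_sub ha0 ha1 hb4]
  field_simp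

theorem condC_alpha_one_iff_general (p : ℝ) (hp1 : 4 < p) :
    ((∫ t in (0:ℝ)..1, betaReg t (3 / p) (1 - 3 / p) * t ^ (2 * p - 9) * (1 - t ^ 4))
        - 1 / 8 ≤ 0 ↔
      1 / 2 * (6 * p - p ^ 2) * betaFn (3 / p) (2 * p - 8) - (p - 2) / (p - 4)
        + (2 * p - 5 + 3 / p) * (2 * p - 6 + 3 / p) * (2 * p - 7 + 3 / p) *
            (2 * p - 8 + 3 / p) /
          (2 * (p - 2) * (2 * p - 5) * (2 * p - 6) * (2 * p - 7)) ≤ 0) := by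
  have hp0 : 0 < p := by linarith
  have ha0 : 0 < 3 / p := by positivity
  have ha1 : 3 / p < 1 := (div_lt_one hp0).2 (by linarith)
  have hb : 0 < 2 * p - 8 := by linarith
  have hB := betaFn_pos_s18 ha0 hb
  have hB4 : betaFn (3 / p) (2 * p - 8 + 4) = (2 * p - 8) / (2 * p - 8 + 3 / p) *
      ((2 * p - 7) / (2 * p - 7 + 3 / p)) * ((2 * p - 6) / (2 * p - 6 + 3 / p)) *
      ((2 * p - 5) / (2 * p - 5 + 3 / p)) * betaFn (3 / p) (2 * p - 8) := by
    rw [show (4 : ℝ) = (4 : ℕ) by norm_num, betaFn_add_nat_right ha0 hb]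
    simp only [Finset.prod_range_succ, Finset.prod_range_zero]
    push_cast
    ring
  have hC : 0 < 4 * (p - 4) * (p - 2) * betaFn (3 / p) (2 * p - 8) := by
    have : 0 < p - 2 := by linarith
    have : 0 < p - 4 := by linarith
    positivity
  rw [show 2 * p - 9 = 2 * p - 8 - 1 by ring,
    integral_betaReg_mul_rpow_mul_one_sub_pow_four ha0 ha1 hb, hB4,
    ← mul_le_mul_iff_right₀ hC, mul_zero]
  apply iff_of_eq
  congr 1
  -- `field_simp` rewrites `2 * p` as `p * 2`, also inside `betaFn`: hence the opaque `B` and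
  -- the side conditions stated in that form.
  generalize betaFn (3 / p) (2 * p - 8) = B at hB ⊢
  obtain ⟨_, _, _, _, _, _, _⟩ : p - 4 ≠ 0 ∧ p - 2 ≠ 0 ∧ p * 2 - 5 ≠ 0 ∧
      p * 2 - 6 ≠ 0 ∧ p * 2 - 7 ≠ 0 ∧ p * 2 - 8 ≠ 0 ∧ p * 2 - 8 + 4 ≠ 0 := by
    refine ⟨?_, ?_, ?_, ?_, ?_, ?_, ?_⟩ <;> linarith
  have := hB.ne'
  field_simp
  ring

theorem condC_alpha_one_iff (p : ℝ) (hp1 : 4 < p) (hp2 : p < 6) :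
    ((∫ t in (0:ℝ)..1, betaReg t (3 / p) (1 - 3 / p) * t ^ (2 * p - 9) * (1 - t ^ 4))
        - 1 / 8 ≤ 0 ↔
      1 / 2 * (6 * p - p ^ 2) * betaFn (3 / p) (2 * p - 8) - (p - 2) / (p - 4)
        + (2 * p - 5 + 3 / p) * (2 * p - 6 + 3 / p) * (2 * p - 7 + 3 / p) *
            (2 * p - 8 + 3 / p) /
          (2 * (p - 2) * (2 * p - 5) * (2 * p - 6) * (2 * p - 7)) ≤ 0) :=
  condC_alpha_one_iff_general p hp1
end
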